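/- Let R be the localization of the polynomial ring ℂ[X] at the prime ideal generated by X, and let M and N be R-modules. For an R-module P, let B(P) denote the submodule of elements annihilated by some power of X. Then in the tensor product M ⊗_R N one has B(M ⊗_R N) = Im(B(M) ⊗_R N → M ⊗_R N) + Im(M ⊗_R B(N) → M ⊗_R N), where the maps are induced by the inclusions B(M) ⊆ M and B(N) ⊆ N. -/

import Mathlib

/-!
Over a Bézout domain torsion-free modules are flat, so `M/tM ⊗ N/tN` is torsion-free and the
torsion of `M ⊗ N` lies in the kernel of `M ⊗ N → M/tM ⊗ N/tN`. By right exactness of `⊗`, that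
kernel is the sum of the images of `tM ⊗ N` and `M ⊗ tN`, both of which are plainly torsion.
The ring `R` is a discrete valuation ring with uniformizer `X`, so `B(P)` is the torsion of `P`.
-/

noncomputable section

/-- The ideal `(X)` of `ℂ[X]`. -/
abbrev Pid : Ideal (Polynomial ℂ) := Ideal.span {Polynomial.X}

instance : Pid.IsPrime :=
  (Ideal.span_singleton_prime Polynomial.X_ne_zero).mpr Polynomial.prime_X

/-- `R`, the localization of `ℂ[X]` at the prime ideal `(X)`. -/
abbrev Rloc : Type := Localization.AtPrime Pid

/-- The image of `X` in `R`. -/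
def XR : Rloc := algebraMap (Polynomial ℂ) Rloc Polynomial.X

/-- For an `R`-module `P`, `B(P)` is the submodule of elements annihilated by
some power of `X`. -/
def Bmod (P : Type*) [AddCommGroup P] [Module Rloc P] : Submodule Rloc P where
  carrier := {z : P | ∃ m : ℕ, XR ^ m • z = 0}
  zero_mem' := ⟨0, by simp⟩
  add_mem' := by
    intro z w hz hw
    obtain ⟨n, hn⟩ := hz
    obtain ⟨m, hm⟩ := hw
    refine ⟨max n m, ?_⟩
    have hz' : XR ^ max n m • z = 0 := by
      have h : XR ^ max n m = XR ^ (max n m - n) * XR ^ n := by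
        rw [← pow_add]; congr 1; omega
      rw [h, mul_smul, hn, smul_zero]
    have hw' : XR ^ max n m • w = 0 := by
      have h : XR ^ max n m = XR ^ (max n m - m) * XR ^ m := by
        rw [← pow_add]; congr 1; omega
      rw [h, mul_smul, hm, smul_zero]
    rw [smul_add, hz', hw', add_zero]
  smul_mem' := by
    intro c z hz
    obtain ⟨m, hm⟩ := hz
    refine ⟨m, ?_⟩
    rw [smul_smul, mul_comm, ← smul_smul, hm, smul_zero]

open TensorProduct LinearMap Submodule

section Torsion

variable {R M N : Type*} [CommRing R] [AddCommGroup M] [Module R M] [AddCommGroup N] [Module R N]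

lemma TensorProduct.ker_map_mkQ (p : Submodule R M) (q : Submodule R N) :
    ker (map p.mkQ q.mkQ) = range (map p.subtype (id : N →ₗ[R] N)) ⊔ range (map id q.subtype) := by
  rw [map_ker (exact_subtype_mkQ p) (mkQ_surjective _) (exact_subtype_mkQ q) (mkQ_surjective _),
    sup_comm]
  rfl

instance Module.Flat.quotient_torsion [IsDomain R] [IsBezout R] :
    Module.Flat R (M ⧸ torsion R M) :=
  Module.Flat.flat_iff_torsion_eq_bot_of_isBezout.mpr QuotientTorsion.torsion_eq_bot

lemma TensorProduct.range_map_torsion_subtype_id_le :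
    range (map (torsion R M).subtype (id : N →ₗ[R] N)) ≤ torsion R (M ⊗[R] N) := by
  rw [range_map_eq_span_tmul, span_le]
  rintro _ ⟨⟨x, a, hx⟩, n, rfl⟩
  refine ⟨a, ?_⟩
  change a • x ⊗ₜ[R] n = 0
  rw [Submonoid.smul_def, smul_tmul', ← Submonoid.smul_def, hx, zero_tmul]

lemma TensorProduct.range_map_id_torsion_subtype_le :
    range (map (id : M →ₗ[R] M) (torsion R N).subtype) ≤ torsion R (M ⊗[R] N) := by
  rw [range_map_eq_span_tmul, span_le]
  rintro _ ⟨m, ⟨y, a, hy⟩, rfl⟩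
  refine ⟨a, ?_⟩
  change a • m ⊗ₜ[R] y = 0
  rw [Submonoid.smul_def, ← tmul_smul, ← Submonoid.smul_def, hy, tmul_zero]

theorem TensorProduct.torsion_eq_sup_range_map [IsDomain R] [IsBezout R] :
    torsion R (M ⊗[R] N) =
      range (map (torsion R M).subtype (id : N →ₗ[R] N)) ⊔
      range (map (id : M →ₗ[R] M) (torsion R N).subtype) := by
  refine le_antisymm ?_ (sup_le range_map_torsion_subtype_id_le range_map_id_torsion_subtype_le)
  rw [← ker_map_mkQ]
  rintro z ⟨a, ha⟩
  have h : map (torsion R M).mkQ (torsion R N).mkQ z ∈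
      torsion R ((M ⧸ torsion R M) ⊗[R] (N ⧸ torsion R N)) :=
    ⟨a, by rw [Submonoid.smul_def, ← map_smul, ← Submonoid.smul_def, ha, map_zero]⟩
  rwa [Module.Flat.torsion_eq_bot (M := (M ⧸ torsion R M) ⊗[R] (N ⧸ torsion R N)), mem_bot]
    at h

end Torsion

theorem IsDiscreteValuationRing.mem_torsion_iff_exists_pow_smul_eq_zero {R M : Type*}
    [CommRing R] [IsDomain R] [IsDiscreteValuationRing R] [AddCommGroup M] [Module R M] {ϖ : R}
    (hϖ : Irreducible ϖ) {z : M} : z ∈ torsion R M ↔ ∃ n : ℕ, ϖ ^ n • z = 0 := by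
  constructor
  · rintro ⟨⟨a, ha⟩, haz⟩
    obtain ⟨n, u, hu⟩ := associated_pow_irreducible (nonZeroDivisors.ne_zero ha) hϖ
    exact ⟨n, by rw [← hu, mul_comm, mul_smul, ← Submonoid.mk_smul a ha, haz, smul_zero]⟩
  · rintro ⟨n, hn⟩
    exact ⟨⟨ϖ ^ n, pow_mem (mem_nonZeroDivisors_of_ne_zero hϖ.ne_zero) n⟩, hn⟩

instance : IsDiscreteValuationRing Rloc :=
  IsLocalization.AtPrime.isDiscreteValuationRing_of_dedekind_domain (Polynomial ℂ)
    (P := Pid) (by simp [Polynomial.X_ne_zero]) Rloc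

lemma irreducible_XR : Irreducible XR := by
  have hinj := IsLocalization.injective Rloc (Ideal.primeCompl_le_nonZeroDivisors Pid)
  refine IsDiscreteValuationRing.irreducible_of_span_eq_maximalIdeal _
    (by simp [XR, map_eq_zero_iff _ hinj, Polynomial.X_ne_zero]) ?_
  rw [← Localization.AtPrime.map_eq_maximalIdeal, Ideal.map_span, Set.image_singleton, XR]

lemma Bmod_eq_torsion (P : Type*) [AddCommGroup P] [Module Rloc P] :
    Bmod P = torsion Rloc P := by
  ext z
  exact (IsDiscreteValuationRing.mem_torsion_iff_exists_pow_smul_eq_zero irreducible_XR).symm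

/-- For `R`-modules `M`, `N` one has
`B(M ⊗_R N) = Im(B(M) ⊗_R N → M ⊗_R N) + Im(M ⊗_R B(N) → M ⊗_R N)`. -/
theorem Bmod_tensorProduct
    (M N : Type*) [AddCommGroup M] [Module Rloc M] [AddCommGroup N] [Module Rloc N] :
    Bmod (TensorProduct Rloc M N) =
      LinearMap.range (TensorProduct.map (Bmod M).subtype (LinearMap.id : N →ₗ[Rloc] N)) ⊔
      LinearMap.range (TensorProduct.map (LinearMap.id : M →ₗ[Rloc] M) (Bmod N).subtype) := by
  rw [Bmod_eq_torsion, Bmod_eq_torsion M, Bmod_eq_torsion N]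
  exact torsion_eq_sup_range_map

end
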